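/- Let X̃ be a complete non-compact Riemannian manifold (or proper geodesic metric space) with a point p̃, and G a discrete group of isometries acting freely on X̃. If X̃ has small diameter growth at p̃, i.e. limsup_{r→∞} diam(∂B(p̃,r))/r < 1, then either the quotient X̃/G is compact or G is finite. -/

import Mathlib

open Metric Filter MeasureTheory

attribute [local instance] Path.Homotopic.setoid

/-- Length of a path in a metric space (total variation). -/
noncomputable def pathLength {X : Type*} [MetricSpace X] {a b : X} (γ : Path a b) : ENNReal :=
  eVariationOn γ Set.univ

/-- `L(C)`: the infimum of lengths of loops based at `p` in the homotopy class `C`. -/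
noncomputable def classLength {X : Type*} [MetricSpace X] (p : X)
    (C : FundamentalGroup X p) : ENNReal :=
  ⨅ γ : {γ : Path p p // (⟦γ⟧ : Path.Homotopic.Quotient p p) = FundamentalGroup.toPath C}, pathLength γ.1

/-- A unit-speed minimizing geodesic on the interval `[s, t]`. -/
def IsMinGeodesicOn {X : Type*} [MetricSpace X] (γ : ℝ → X) (s t : ℝ) : Prop :=
  ∀ u ∈ Set.Icc s t, ∀ v ∈ Set.Icc s t, dist (γ u) (γ v) = |u - v|

/-- A geodesic ray: unit-speed and globally minimizing on `[0, ∞)`. -/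
def IsRay {X : Type*} [MetricSpace X] (γ : ℝ → X) : Prop :=
  ∀ u ∈ Set.Ici (0 : ℝ), ∀ v ∈ Set.Ici (0 : ℝ), dist (γ u) (γ v) = |u - v|

/-- Euclidean comparison angle from the three side lengths. -/
noncomputable def compAngle (a b c : ℝ) : ℝ :=
  Real.arccos ((a ^ 2 + b ^ 2 - c ^ 2) / (2 * a * b))

/-- The (upper) angle at the common origin between two geodesics, defined via
Euclidean comparison angles. -/
noncomputable def upperAngle {X : Type*} [MetricSpace X] (γ₁ γ₂ : ℝ → X) : ℝ :=
  limsup (fun st : ℝ × ℝ => compAngle st.1 st.2 (dist (γ₁ st.1) (γ₂ st.2)))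
    (nhdsWithin 0 (Set.Ioi (0 : ℝ) ×ˢ Set.Ioi (0 : ℝ)))

/-- Grove–Shiohama criticality of `m` for the distance function `d(p, ·)`:
every geodesic direction at `m` makes an angle `≤ π/2` with some minimizing
geodesic from `m` to `p`. -/
def IsCriticalPoint {X : Type*} [MetricSpace X] (p m : X) : Prop :=
  ∀ σ : ℝ → X, σ 0 = m → (∃ ε > 0, IsMinGeodesicOn σ 0 ε) →
    ∃ τ : ℝ → X, τ 0 = m ∧ τ (dist m p) = p ∧ IsMinGeodesicOn τ 0 (dist m p) ∧
      upperAngle σ τ ≤ Real.pi / 2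

/-- A nontrivial class is irreducible if in every decomposition `C = C₁C₂`, one of the
factors is at least as long as `C`. -/
def IrreducibleClass {X : Type*} [MetricSpace X] (p : X) (C : FundamentalGroup X p) : Prop :=
  C ≠ 1 ∧ ∀ C₁ C₂ : FundamentalGroup X p, C = C₁ * C₂ →
    classLength p C ≤ classLength p C₁ ∨ classLength p C ≤ classLength p C₂

/-!
If some closed ball about `p` meets every orbit, the quotient is the image of that compact ball.
Otherwise, if `G` is infinite, proper discontinuity makes the orbit of `p` unbounded. For
`r = d(p, g • p)` pick an orbit avoiding the closed `r`-ball and a point `y` of it nearest to `p`.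
As `G` acts by isometries, `d(g • p, y) ≥ d(p, g⁻¹ • y) ≥ d(p, y)`, so the point at distance `r`
from `p` on a minimizing geodesic to `y` is at distance `≥ r` from `g • p`. Both points lie on
`sphere p r`, so `diam (sphere p r) ≥ r` for arbitrarily large `r`, contradicting the growth bound.
-/

open MulAction

lemma ProperlyDiscontinuousSMul.finite_setOf_smul_mem (G : Type*) {X : Type*} [TopologicalSpace X]
    [SMul G X] [ProperlyDiscontinuousSMul G X] (x : X) {K : Set X} (hK : IsCompact K) :
    {g : G | g • x ∈ K}.Finite :=
  (finite_disjoint_inter_image isCompact_singleton hK).subset fun g hg => ⟨g • x, ⟨x, rfl, rfl⟩, hg⟩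

lemma finite_orbit_inter_of_isCompact {X : Type*} [TopologicalSpace X] (G : Type*) [Group G]
    [MulAction G X] [ProperlyDiscontinuousSMul G X] (x : X) {K : Set X} (hK : IsCompact K) :
    (orbit G x ∩ K).Finite := by
  refine ((ProperlyDiscontinuousSMul.finite_setOf_smul_mem G x hK).image (· • x)).subset ?_
  rintro _ ⟨⟨g, rfl⟩, hg⟩
  exact ⟨g, hg, rfl⟩

lemma compactSpace_quotient_orbitRel_of_forall_exists_smul_mem {G X : Type*} [Group G]
    [MulAction G X] [TopologicalSpace X] {K : Set X} (hK : IsCompact K)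
    (h : ∀ x : X, ∃ g : G, g • x ∈ K) : CompactSpace (Quotient (orbitRel G X)) := by
  refine ⟨?_⟩
  convert hK.image (continuous_quotient_mk' (s := orbitRel G X))
  refine (Set.eq_univ_of_forall fun q => ?_).symm
  obtain ⟨x, rfl⟩ := Quotient.exists_rep q
  obtain ⟨g, hg⟩ := h x
  exact ⟨g • x, hg, Quotient.sound (mem_orbit x g)⟩

section ProperSpace

variable (G : Type*) {X : Type*} [MetricSpace X] [ProperSpace X] [Group G] [MulAction G X]
  [ProperlyDiscontinuousSMul G X]

lemma exists_lt_dist_smul_of_infinite [Infinite G] (p : X) (a : ℝ) :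
    ∃ g : G, a < dist p (g • p) := by
  by_contra! h
  refine Set.infinite_univ
    (ProperlyDiscontinuousSMul.finite_setOf_smul_mem G p (isCompact_closedBall p a) |>.subset ?_)
  exact fun g _ => mem_closedBall'.mpr (h g)

lemma exists_mem_orbit_forall_dist_le (p x : X) :
    ∃ y ∈ orbit G x, ∀ g : G, dist p y ≤ dist p (g • y) := by
  obtain ⟨y, ⟨hyx, hy⟩, hmin⟩ := Set.exists_min_image _ (dist p)
    (finite_orbit_inter_of_isCompact G x (isCompact_closedBall p (dist p x)))
    ⟨x, mem_orbit_self x, mem_closedBall'.mpr le_rfl⟩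
  refine ⟨y, hyx, fun g => ?_⟩
  by_cases hg : dist p (g • y) ≤ dist p x
  · exact hmin _ ⟨mem_orbit_of_mem_orbit g hyx, mem_closedBall'.mpr hg⟩
  · exact (mem_closedBall'.mp hy).trans (not_le.mp hg).le

end ProperSpace

section Geodesic

variable {X : Type*} [MetricSpace X]

lemma IsMinGeodesicOn.dist_eq_and_dist_eq_sub {γ : ℝ → X} {p y : X} (hp : γ 0 = p)
    (hy : γ (dist p y) = y) (hγ : IsMinGeodesicOn γ 0 (dist p y)) {r : ℝ} (hr₀ : 0 ≤ r)
    (hr : r ≤ dist p y) : dist p (γ r) = r ∧ dist (γ r) y = dist p y - r := by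
  have hr_mem : r ∈ Set.Icc 0 (dist p y) := ⟨hr₀, hr⟩
  constructor
  · rw [← hp, hγ 0 ⟨le_rfl, dist_nonneg⟩ r hr_mem, zero_sub, abs_neg, abs_of_nonneg hr₀]
  · rw [← hy, hγ r hr_mem _ ⟨dist_nonneg, le_rfl⟩, hy, abs_of_nonpos (by linarith)]
    ring

variable {G : Type*} [Group G] [MulAction G X]

lemma dist_le_dist_smul_of_forall_dist_le (hiso : ∀ g : G, Isometry (fun x : X => g • x))
    {p y : X} (hy : ∀ g : G, dist p y ≤ dist p (g • y)) (g : G) :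
    dist p y ≤ dist (g • p) y :=
  calc dist p y ≤ dist p (g⁻¹ • y) := hy g⁻¹
    _ = dist (g • p) (g • g⁻¹ • y) := ((hiso g).dist_eq _ _).symm
    _ = dist (g • p) y := by rw [smul_inv_smul]

lemma dist_smul_le_diam_sphere
    (hgeo : ∀ x y : X, ∃ γ : ℝ → X, γ 0 = x ∧ γ (dist x y) = y ∧ IsMinGeodesicOn γ 0 (dist x y))
    (hiso : ∀ g : G, Isometry (fun x : X => g • x)) {p y : X}
    (hy : ∀ g : G, dist p y ≤ dist p (g • y)) {g : G} (hgy : dist p (g • p) ≤ dist p y) :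
    dist p (g • p) ≤ diam (sphere p (dist p (g • p))) := by
  set r := dist p (g • p)
  obtain ⟨γ, hp, hy', hγ⟩ := hgeo p y
  obtain ⟨hγr, hγry⟩ := hγ.dist_eq_and_dist_eq_sub hp hy' dist_nonneg hgy
  have hgp_far := dist_le_dist_smul_of_forall_dist_le hiso hy g
  calc r ≤ dist (g • p) (γ r) := by linarith [dist_triangle (g • p) (γ r) y]
    _ ≤ diam (sphere p r) :=
      dist_le_diam_of_mem isBounded_sphere (mem_sphere'.mpr rfl) (mem_sphere'.mpr hγr)

end Geodesic

lemma eventually_diam_sphere_lt_of_limsup_lt {X : Type*} [MetricSpace X] {p : X}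
    (h : limsup (fun r : ℝ => diam (sphere p r) / r) atTop < 1) :
    ∀ᶠ r in atTop, diam (sphere p r) < r := by
  have hbdd : IsBoundedUnder (· ≤ ·) atTop (fun r : ℝ => diam (sphere p r) / r) := by
    refine isBoundedUnder_of_eventually_le (a := 2) ?_
    filter_upwards [eventually_gt_atTop 0] with r hr
    rw [div_le_iff₀ hr]
    exact (diam_mono sphere_subset_closedBall isBounded_closedBall).trans (diam_closedBall hr.le)
  filter_upwards [eventually_lt_of_limsup_lt h hbdd, eventually_gt_atTop 0] with r hlt hr
  rwa [div_lt_one hr] at hlt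

theorem small_diameter_growth_compact_or_finite_general {X : Type*} [MetricSpace X]
    [ProperSpace X] (p : X)
    (hgeo : ∀ x y : X, ∃ γ : ℝ → X, γ 0 = x ∧ γ (dist x y) = y ∧
      IsMinGeodesicOn γ 0 (dist x y))
    (G : Type*) [Group G] [MulAction G X]
    (hiso : ∀ g : G, Isometry (fun x : X => g • x))
    [ProperlyDiscontinuousSMul G X]
    (hgrowth : limsup (fun r : ℝ => diam (sphere p r) / r) atTop < 1) :
    CompactSpace (Quotient (MulAction.orbitRel G X)) ∨ Finite G := by
  by_cases hball : ∃ R, ∀ x : X, ∃ g : G, g • x ∈ closedBall p R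
  · obtain ⟨R, hR⟩ := hball
    exact .inl <|
      compactSpace_quotient_orbitRel_of_forall_exists_smul_mem (isCompact_closedBall p R) hR
  refine .inr (not_infinite_iff_finite.mp fun _ => ?_)
  push Not at hball
  obtain ⟨a, ha⟩ := (eventually_diam_sphere_lt_of_limsup_lt hgrowth).exists_forall_of_atTop
  obtain ⟨g, hg⟩ := exists_lt_dist_smul_of_infinite G p a
  obtain ⟨x, hx⟩ := hball (dist p (g • p))
  obtain ⟨_, ⟨g₀, rfl⟩, hy⟩ := exists_mem_orbit_forall_dist_le G p x
  have hfar : dist p (g • p) ≤ dist p (g₀ • x) := (not_le.mp (mt mem_closedBall'.mpr (hx g₀))).le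
  exact (ha _ hg.le).not_ge (dist_smul_le_diam_sphere hgeo hiso hy hfar)

/-- if a complete non-compact proper geodesic space has small diameter
growth at a point, then for any discrete free isometric action the quotient is compact
or the group is finite. -/
theorem small_diameter_growth_compact_or_finite {X : Type*} [MetricSpace X]
    [ProperSpace X] [NoncompactSpace X] (p : X)
    (hgeo : ∀ x y : X, ∃ γ : ℝ → X, γ 0 = x ∧ γ (dist x y) = y ∧
      IsMinGeodesicOn γ 0 (dist x y))
    (G : Type*) [Group G] [MulAction G X]
    (hiso : ∀ g : G, Isometry (fun x : X => g • x))
    [ProperlyDiscontinuousSMul G X]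
    (hfree : ∀ (g : G) (x : X), g • x = x → g = 1)
    (hgrowth : limsup (fun r : ℝ => diam (sphere p r) / r) atTop < 1) :
    CompactSpace (Quotient (MulAction.orbitRel G X)) ∨ Finite G :=
  small_diameter_growth_compact_or_finite_general p hgeo G hiso hgrowth
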